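/- arXiv:2603.27540 — 4 statements merged into one kernel-verified Lean document; each statement's English description precedes it below -/
import Mathlib

section
/- Let T > 0 and let v : [0,T] → ℝ be a continuous (integrable) function, and define the trajectory x(t) = ∫₀ᵗ v(τ) dτ. Then the variance functional 𝒱(v) = (1/T)∫₀ᵀ [x(t) − (1/T)∫₀ᵀ x(τ) dτ]² dt admits the kernel representation 𝒱(v) = ∫₀ᵀ∫₀ᵀ v(u) K(u,s) v(s) du ds, where K(u,s) = (T·min(u,s) − u·s)/T². -/
open Real intervalIntegral

lemma var_kernel_aux (T : ℝ) (hT : 0 < T) (w : ℝ → ℝ) (hw : Continuous w) :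
    (1 / T) * ∫ t in (0:ℝ)..T,
        ((∫ τ in (0:ℝ)..t, w τ) - (1 / T) * ∫ τ in (0:ℝ)..T, ∫ σ in (0:ℝ)..τ, w σ) ^ 2 =
      ∫ u in (0:ℝ)..T, ∫ s in (0:ℝ)..T,
        w u * ((T * min u s - u * s) / T ^ 2) * w s := by
  set y : ℝ → ℝ := fun t => ∫ τ in (0:ℝ)..t, w τ with hy_def
  have hyderiv : ∀ t : ℝ, HasDerivAt y (w t) t := fun t =>
    (hw.integral_hasStrictDerivAt 0 t).hasDerivAt
  have hycont : Continuous y :=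
    continuous_iff_continuousAt.mpr fun t => (hyderiv t).continuousAt
  set A : ℝ := ∫ τ in (0:ℝ)..T, y τ with hA_def
  set G : ℝ → ℝ := fun u => ∫ τ in (0:ℝ)..u, y τ with hG_def
  have hGderiv : ∀ t : ℝ, HasDerivAt G (y t) t := fun t =>
    (hycont.integral_hasStrictDerivAt 0 t).hasDerivAt
  have hGcont : Continuous G :=
    continuous_iff_continuousAt.mpr fun t => (hGderiv t).continuousAt
  have hGT : G T = A := rfl
  -- integration by parts 1 : ∫_0^u s * w s = u * y u - G u
  have ibp1 : ∀ u : ℝ, (∫ s in (0:ℝ)..u, s * w s) = u * y u - G u := by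
    intro u
    have h := integral_mul_deriv_eq_deriv_mul (a := 0) (b := u)
      (u := fun s : ℝ => s) (v := y) (u' := fun _ => (1:ℝ)) (v' := w)
      (fun s _ => hasDerivAt_id s) (fun s _ => hyderiv s)
      (intervalIntegrable_const) (hw.intervalIntegrable 0 u)
    have hy0 : y 0 = 0 := integral_same
    rw [h, hy0]
    simp [hG_def]
  -- integration by parts 2 : ∫_u^T (T - s) * w s = -(T - u) * y u + (A - G u)
  have ibp2 : ∀ u : ℝ, (∫ s in u..T, (T - s) * w s) = -(T - u) * y u + (A - G u) := by
    intro u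
    have h := integral_mul_deriv_eq_deriv_mul (a := u) (b := T)
      (u := fun s : ℝ => T - s) (v := y) (u' := fun _ => (-1:ℝ)) (v' := w)
      (fun s _ => (hasDerivAt_id s).const_sub T) (fun s _ => hyderiv s)
      (intervalIntegrable_const) (hw.intervalIntegrable u T)
    have hsplit : G u + (∫ τ in u..T, y τ) = A :=
      integral_add_adjacent_intervals (hycont.intervalIntegrable 0 u)
        (hycont.intervalIntegrable u T)
    have hyT : (∫ τ in u..T, y τ) = A - G u := by linarith
    rw [h]
    have : (∫ s in u..T, (-1:ℝ) * y s) = -(A - G u) := by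
      rw [← hyT]
      simp [intervalIntegral.integral_neg]
    rw [this]
    ring
  -- inner integral computation
  have inner : ∀ u ∈ Set.Icc (0:ℝ) T,
      (∫ s in (0:ℝ)..T, w u * ((T * min u s - u * s) / T ^ 2) * w s)
        = w u * ((u * A - T * G u) / T ^ 2) := by
    intro u hu
    obtain ⟨hu0, huT⟩ := hu
    have hfc : Continuous fun s : ℝ => (T * min u s - u * s) * w s := by
      exact ((continuous_const.mul (continuous_const.min continuous_id)).sub
        (continuous_const.mul continuous_id)).mul hw
    have step1 : (∫ s in (0:ℝ)..T, w u * ((T * min u s - u * s) / T ^ 2) * w s)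
        = (w u / T ^ 2) * ∫ s in (0:ℝ)..T, (T * min u s - u * s) * w s := by
      rw [← intervalIntegral.integral_const_mul]
      apply intervalIntegral.integral_congr
      intro s _
      ring
    have hsplit : (∫ s in (0:ℝ)..u, (T * min u s - u * s) * w s)
        + (∫ s in u..T, (T * min u s - u * s) * w s)
        = ∫ s in (0:ℝ)..T, (T * min u s - u * s) * w s :=
      integral_add_adjacent_intervals (hfc.intervalIntegrable 0 u)
        (hfc.intervalIntegrable u T)
    have piece1 : (∫ s in (0:ℝ)..u, (T * min u s - u * s) * w s)
        = (T - u) * (u * y u - G u) := by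
      have : (∫ s in (0:ℝ)..u, (T * min u s - u * s) * w s)
          = ∫ s in (0:ℝ)..u, (T - u) * (s * w s) := by
        apply intervalIntegral.integral_congr
        intro s hs
        rw [Set.uIcc_of_le hu0] at hs
        show (T * min u s - u * s) * w s = (T - u) * (s * w s)
        rw [min_eq_right hs.2]
        ring
      rw [this, intervalIntegral.integral_const_mul, ibp1]
    have piece2 : (∫ s in u..T, (T * min u s - u * s) * w s)
        = u * (-(T - u) * y u + (A - G u)) := by
      have : (∫ s in u..T, (T * min u s - u * s) * w s)
          = ∫ s in u..T, u * ((T - s) * w s) := by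
        apply intervalIntegral.integral_congr
        intro s hs
        rw [Set.uIcc_of_le huT] at hs
        show (T * min u s - u * s) * w s = u * ((T - s) * w s)
        rw [min_eq_left hs.1]
        ring
      rw [this, intervalIntegral.integral_const_mul, ibp2]
    rw [step1, ← hsplit, piece1, piece2]
    ring
  -- rewrite the RHS outer integral
  have hTuIcc : Set.uIcc (0:ℝ) T = Set.Icc 0 T := Set.uIcc_of_le hT.le
  have outer0 : (∫ u in (0:ℝ)..T, ∫ s in (0:ℝ)..T,
        w u * ((T * min u s - u * s) / T ^ 2) * w s)
      = ∫ u in (0:ℝ)..T, w u * ((u * A - T * G u) / T ^ 2) := by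
    apply intervalIntegral.integral_congr
    intro u hu
    rw [hTuIcc] at hu
    exact inner u hu
  -- ibp 3 : ∫_0^T u * w u = T * y T - A
  have ibp3 : (∫ u in (0:ℝ)..T, u * w u) = T * y T - A := by
    rw [ibp1 T]
  -- ibp 4 : ∫_0^T G u * w u = A * y T - ∫ y * y
  have ibp4 : (∫ u in (0:ℝ)..T, G u * w u) = A * y T - ∫ u in (0:ℝ)..T, y u * y u := by
    have h := integral_mul_deriv_eq_deriv_mul (a := 0) (b := T)
      (u := G) (v := y) (u' := y) (v' := w)
      (fun s _ => hGderiv s) (fun s _ => hyderiv s)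
      (hycont.intervalIntegrable 0 T) (hw.intervalIntegrable 0 T)
    have hy0 : y 0 = 0 := integral_same
    rw [h, hGT, hy0]
    ring
  have outer1 : (∫ u in (0:ℝ)..T, w u * ((u * A - T * G u) / T ^ 2))
      = (A / T ^ 2) * (T * y T - A) - (T / T ^ 2) * (A * y T - ∫ u in (0:ℝ)..T, y u * y u) := by
    have hcong : (∫ u in (0:ℝ)..T, w u * ((u * A - T * G u) / T ^ 2))
        = ∫ u in (0:ℝ)..T, ((A / T ^ 2) * (u * w u) - (T / T ^ 2) * (G u * w u)) := by
      apply intervalIntegral.integral_congr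
      intro u _
      ring
    rw [hcong, intervalIntegral.integral_sub, intervalIntegral.integral_const_mul,
      intervalIntegral.integral_const_mul, ibp3, ibp4]
    · exact ((continuous_const.mul (continuous_id.mul hw)).intervalIntegrable 0 T)
    · exact ((continuous_const.mul (hGcont.mul hw)).intervalIntegrable 0 T)
  -- LHS expansion
  have lhs1 : (∫ t in (0:ℝ)..T, (y t - (1 / T) * A) ^ 2)
      = (∫ u in (0:ℝ)..T, y u * y u) - 2 * ((1 / T) * A) * A + T * ((1 / T) * A) ^ 2 := by
    have hcong : (∫ t in (0:ℝ)..T, (y t - (1 / T) * A) ^ 2)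
        = ∫ t in (0:ℝ)..T, (y t * y t - (2 * ((1 / T) * A)) * y t + ((1 / T) * A) ^ 2) := by
      apply intervalIntegral.integral_congr
      intro t _
      ring
    rw [hcong, intervalIntegral.integral_add, intervalIntegral.integral_sub,
      intervalIntegral.integral_const_mul, intervalIntegral.integral_const]
    · simp only [smul_eq_mul, sub_zero]; try ring
    · exact (hycont.mul hycont).intervalIntegrable 0 T
    · exact ((continuous_const.mul hycont).intervalIntegrable 0 T)
    · exact (((hycont.mul hycont).sub (continuous_const.mul hycont)).intervalIntegrable 0 T)
    · exact intervalIntegrable_const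
  rw [outer0, outer1, lhs1]
  have hT' : T ≠ 0 := ne_of_gt hT
  field_simp
  ring

theorem variance_kernel_representation
    (T : ℝ) (hT : 0 < T) (v : ℝ → ℝ) (hv : ContinuousOn v (Set.Icc 0 T))
    (x : ℝ → ℝ) (hx : ∀ t, x t = ∫ τ in (0:ℝ)..t, v τ) :
    (1 / T) * ∫ t in (0:ℝ)..T, (x t - (1 / T) * ∫ τ in (0:ℝ)..T, x τ) ^ 2 =
      ∫ u in (0:ℝ)..T, ∫ s in (0:ℝ)..T,
        v u * ((T * min u s - u * s) / T ^ 2) * v s := by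
  set w : ℝ → ℝ := Set.IccExtend hT.le ((Set.Icc (0:ℝ) T).restrict v) with hw_def
  have hw : Continuous w :=
    continuous_IccExtend_iff.mpr (continuousOn_iff_continuous_restrict.mp hv)
  have hwv : ∀ t ∈ Set.Icc (0:ℝ) T, w t = v t := by
    intro t ht
    rw [hw_def, Set.IccExtend_of_mem hT.le _ ht]
    rfl
  have hTuIcc : Set.uIcc (0:ℝ) T = Set.Icc 0 T := Set.uIcc_of_le hT.le
  -- x agrees with the integral of w on [0,T]
  have hxw : ∀ t ∈ Set.Icc (0:ℝ) T, x t = ∫ τ in (0:ℝ)..t, w τ := by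
    intro t ht
    rw [hx t]
    apply intervalIntegral.integral_congr
    intro τ hτ
    rw [Set.uIcc_of_le ht.1] at hτ
    exact (hwv τ ⟨hτ.1, le_trans hτ.2 ht.2⟩).symm
  have hmean : (∫ τ in (0:ℝ)..T, x τ) = ∫ τ in (0:ℝ)..T, ∫ σ in (0:ℝ)..τ, w σ := by
    apply intervalIntegral.integral_congr
    intro τ hτ
    rw [hTuIcc] at hτ
    exact hxw τ hτ
  have hL : (∫ t in (0:ℝ)..T, (x t - (1 / T) * ∫ τ in (0:ℝ)..T, x τ) ^ 2)
      = ∫ t in (0:ℝ)..T,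
          ((∫ τ in (0:ℝ)..t, w τ) - (1 / T) * ∫ τ in (0:ℝ)..T, ∫ σ in (0:ℝ)..τ, w σ) ^ 2 := by
    apply intervalIntegral.integral_congr
    intro t ht
    rw [hTuIcc] at ht
    show (x t - (1 / T) * ∫ τ in (0:ℝ)..T, x τ) ^ 2
      = ((∫ τ in (0:ℝ)..t, w τ) - (1 / T) * ∫ τ in (0:ℝ)..T, ∫ σ in (0:ℝ)..τ, w σ) ^ 2
    rw [hxw t ht, hmean]
  have hR : (∫ u in (0:ℝ)..T, ∫ s in (0:ℝ)..T, v u * ((T * min u s - u * s) / T ^ 2) * v s)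
      = ∫ u in (0:ℝ)..T, ∫ s in (0:ℝ)..T, w u * ((T * min u s - u * s) / T ^ 2) * w s := by
    apply intervalIntegral.integral_congr
    intro u hu
    rw [hTuIcc] at hu
    apply intervalIntegral.integral_congr
    intro s hs
    rw [hTuIcc] at hs
    show v u * ((T * min u s - u * s) / T ^ 2) * v s
      = w u * ((T * min u s - u * s) / T ^ 2) * w s
    rw [hwv u hu, hwv s hs]
  rw [hL, hR]
  exact var_kernel_aux T hT w hw
end

section
/- Let T > 0, K(u,s) = (T·min(u,s) − u·s)/T², φₙ(t) = √(2/T)·sin(nπt/T), and λₙ = T/(nπ)². Then the series Σₙ₌₁^∞ λₙ φₙ(t) φₙ(s) converges absolutely for each (t,s) ∈ [0,T]², the convergence of the partial sums is uniform on [0,T]², and its sum equals K(t,s) for all (t,s) ∈ [0,T]². -/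
open Real Filter

lemma bern2_eval (x : ℝ) :
    (Polynomial.map (algebraMap ℚ ℝ) (Polynomial.bernoulli 2)).eval x = x^2 - x + 1/6 := by
  have h2 : _root_.bernoulli 2 = 1/6 := by rw [_root_.bernoulli, bernoulli'_two]; norm_num
  rw [Polynomial.bernoulli]
  simp [Finset.sum_range_succ, bernoulli_zero, bernoulli_one, h2]
  ring

lemma key_hasSum {x y : ℝ} (hx : x ∈ Set.Icc (0:ℝ) 1) (hy : y ∈ Set.Icc (0:ℝ) 1) :
    HasSum (fun n : ℕ => 2 / ((n : ℝ) * π)^2 * (Real.sin (n*π*x) * Real.sin (n*π*y)))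
      (min x y - x*y) := by
  obtain ⟨hx0, hx1⟩ := hx
  obtain ⟨hy0, hy1⟩ := hy
  have ha : |x - y| / 2 ∈ Set.Icc (0:ℝ) 1 := by
    constructor
    · positivity
    · rw [div_le_one (by norm_num), abs_le]; constructor <;> linarith
  have hb : (x + y) / 2 ∈ Set.Icc (0:ℝ) 1 := ⟨by positivity, by linarith⟩
  have h1 := hasSum_one_div_nat_pow_mul_cos (k := 1) one_ne_zero ha
  have h2 := hasSum_one_div_nat_pow_mul_cos (k := 1) one_ne_zero hb
  have h3 := (h1.sub h2).mul_left (1 / π ^ 2)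
  have hπ := pi_ne_zero
  have hfun : (fun n : ℕ => 2 / ((n : ℝ) * π)^2 * (Real.sin (n*π*x) * Real.sin (n*π*y)))
      = fun n : ℕ => 1 / π ^ 2 *
        (1 / (n:ℝ) ^ (2*1) * Real.cos (2 * π * n * (|x - y| / 2))
          - 1 / (n:ℝ) ^ (2*1) * Real.cos (2 * π * n * ((x + y) / 2))) := by
    funext n
    rcases Nat.eq_zero_or_pos n with hn | hn
    · subst hn; simp
    · have hn' : (n : ℝ) ≠ 0 := Nat.cast_ne_zero.mpr hn.ne'
      have hca : Real.cos (2 * π * n * (|x - y| / 2)) = Real.cos (n * π * (x - y)) := by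
        have : 2 * π * n * (|x - y| / 2) = |n * π * (x - y)| := by
          rw [abs_mul, abs_mul, Nat.abs_cast, abs_of_nonneg pi_pos.le]
          ring
        rw [this, Real.cos_abs]
      have hcb : 2 * π * (n:ℝ) * ((x + y) / 2) = n * π * (x + y) := by ring
      rw [hca, hcb]
      have hc := Real.cos_sub_cos (n * π * (x - y)) (n * π * (x + y))
      have e1 : ((n:ℝ) * π * (x - y) + n * π * (x + y)) / 2 = n * π * x := by ring
      have e2 : ((n:ℝ) * π * (x - y) - n * π * (x + y)) / 2 = -(n * π * y) := by ring
      rw [e1, e2, Real.sin_neg] at hc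
      field_simp
      rw [hc]; ring
  rw [hfun]
  have hval : min x y - x*y = 1 / π ^ 2 *
      ((-1:ℝ) ^ (1 + 1) * (2 * π) ^ (2*1) / 2 / (Nat.factorial (2*1) : ℝ) *
          (Polynomial.map (algebraMap ℚ ℝ) (Polynomial.bernoulli (2*1))).eval (|x - y| / 2)
        - (-1:ℝ) ^ (1 + 1) * (2 * π) ^ (2*1) / 2 / (Nat.factorial (2*1) : ℝ) *
          (Polynomial.map (algebraMap ℚ ℝ) (Polynomial.bernoulli (2*1))).eval ((x + y) / 2)) := by
    have h21 : (2*1 : ℕ) = 2 := rfl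
    rw [h21, bern2_eval, bern2_eval]
    norm_num [Nat.factorial]
    rcases le_total x y with h | h
    · rw [min_eq_left h, abs_of_nonpos (by linarith : x - y ≤ 0)]
      field_simp; ring
    · rw [min_eq_right h, abs_of_nonneg (by linarith : (0:ℝ) ≤ x - y)]
      field_simp; ring
  rw [hval]
  exact h3

theorem mercer_series_of_variance_kernel
    (T : ℝ) (hT : 0 < T)
    (K : ℝ → ℝ → ℝ) (hK : ∀ u s, K u s = (T * min u s - u * s) / T ^ 2)
    (φ : ℕ → ℝ → ℝ)
    (hφ : ∀ n t, φ n t = Real.sqrt (2 / T) * Real.sin (n * Real.pi * t / T))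
    (lam : ℕ → ℝ) (hlam : ∀ n, lam n = T / (n * Real.pi) ^ 2) :
    (∀ t ∈ Set.Icc (0:ℝ) T, ∀ s ∈ Set.Icc (0:ℝ) T,
        Summable (fun n : ℕ => |lam (n + 1) * φ (n + 1) t * φ (n + 1) s|)) ∧
    TendstoUniformlyOn
        (fun N : ℕ => fun p : ℝ × ℝ =>
          ∑ n ∈ Finset.range N, lam (n + 1) * φ (n + 1) p.1 * φ (n + 1) p.2)
        (fun p : ℝ × ℝ => K p.1 p.2) atTop
        (Set.Icc (0:ℝ) T ×ˢ Set.Icc (0:ℝ) T) ∧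
    (∀ t ∈ Set.Icc (0:ℝ) T, ∀ s ∈ Set.Icc (0:ℝ) T,
        ∑' n : ℕ, lam (n + 1) * φ (n + 1) t * φ (n + 1) s = K t s) := by
  have hT' : T ≠ 0 := hT.ne'
  have hπ := pi_ne_zero
  -- term rewriting
  have hterm : ∀ (n : ℕ) (t s : ℝ), lam n * φ n t * φ n s
      = 2 / ((n:ℝ) * π)^2 * (Real.sin ((n:ℝ)*π*(t/T)) * Real.sin ((n:ℝ)*π*(s/T))) := by
    intro n t s
    have hsq : Real.sqrt (2/T) * Real.sqrt (2/T) = 2/T :=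
      Real.mul_self_sqrt (by positivity)
    have e : ∀ u : ℝ, (n:ℝ) * π * u / T = (n:ℝ)*π*(u/T) := fun u => by ring
    have hc : T / ((n:ℝ)*π)^2 * (2/T) = 2 / ((n:ℝ)*π)^2 := by
      rw [div_mul_div_comm, mul_comm (((n:ℝ)*π)^2) T, mul_div_mul_left _ _ hT']
    calc lam n * φ n t * φ n s
        = (T / ((n:ℝ)*π)^2 * (Real.sqrt (2/T) * Real.sqrt (2/T)))
          * (Real.sin ((n:ℝ)*π*(t/T)) * Real.sin ((n:ℝ)*π*(s/T))) := by
          rw [hlam, hφ, hφ, e t, e s]; ring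
      _ = _ := by rw [hsq, hc]
  -- uniform bound
  have hbound : ∀ (n : ℕ) (t s : ℝ), |lam (n+1) * φ (n+1) t * φ (n+1) s|
      ≤ 2 / π^2 * (1 / ((n:ℝ)+1)^2) := by
    intro n t s
    rw [hterm]
    have hA : |Real.sin (((n+1:ℕ):ℝ)*π*(t/T)) * Real.sin (((n+1:ℕ):ℝ)*π*(s/T))| ≤ 1 := by
      rw [abs_mul]
      exact mul_le_one₀ (abs_sin_le_one _) (abs_nonneg _) (abs_sin_le_one _)
    have hcpos : (0:ℝ) ≤ 2 / (((n+1:ℕ):ℝ) * π)^2 := by positivity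
    have heq : 2 / (((n+1:ℕ):ℝ) * π)^2 = 2 / π^2 * (1 / ((n:ℝ)+1)^2) := by
      push_cast
      field_simp
    calc |2 / (((n+1:ℕ):ℝ) * π)^2 * (Real.sin _ * Real.sin _)|
        = 2 / (((n+1:ℕ):ℝ) * π)^2 * |Real.sin _ * Real.sin _| := by
          rw [abs_mul, abs_of_nonneg hcpos]
      _ ≤ 2 / (((n+1:ℕ):ℝ) * π)^2 * 1 := by
          exact mul_le_mul_of_nonneg_left hA hcpos
      _ = 2 / π^2 * (1 / ((n:ℝ)+1)^2) := by rw [mul_one, heq]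
  -- summable majorant
  have hsumm_u : Summable (fun n : ℕ => 2 / π^2 * (1 / ((n:ℝ)+1)^2)) := by
    apply Summable.mul_left
    have h := (summable_nat_add_iff (f := fun n : ℕ => 1 / (n:ℝ)^2) 1).mpr
      (summable_one_div_nat_pow.mpr one_lt_two)
    refine h.congr fun n => ?_
    push_cast
    ring_nf
  -- part 3: pointwise sum
  have h3 : ∀ t ∈ Set.Icc (0:ℝ) T, ∀ s ∈ Set.Icc (0:ℝ) T,
      HasSum (fun n : ℕ => lam (n + 1) * φ (n + 1) t * φ (n + 1) s) (K t s) := by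
    intro t ht s hs
    have hx : t/T ∈ Set.Icc (0:ℝ) 1 :=
      ⟨div_nonneg ht.1 hT.le, (div_le_one hT).mpr ht.2⟩
    have hy : s/T ∈ Set.Icc (0:ℝ) 1 :=
      ⟨div_nonneg hs.1 hT.le, (div_le_one hT).mpr hs.2⟩
    have key := key_hasSum hx hy
    have hshift : HasSum (fun n : ℕ =>
        2 / (((n+1:ℕ):ℝ) * π)^2 * (Real.sin (((n+1:ℕ):ℝ)*π*(t/T)) * Real.sin (((n+1:ℕ):ℝ)*π*(s/T))))
        (min (t/T) (s/T) - (t/T)*(s/T)) := by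
      apply (hasSum_nat_add_iff (f := fun n : ℕ =>
        2 / ((n:ℝ) * π)^2 * (Real.sin ((n:ℝ)*π*(t/T)) * Real.sin ((n:ℝ)*π*(s/T)))) 1).mpr
      simpa using key
    have hKeq : K t s = min (t/T) (s/T) - (t/T)*(s/T) := by
      rw [hK, show t / T ⊓ s / T = (t ⊓ s) / T from min_div_div_right hT.le t s]
      field_simp
    rw [hKeq]
    exact hshift.congr_fun fun n => hterm (n+1) t s
  refine ⟨?_, ?_, ?_⟩
  · intro t ht s hs
    exact Summable.of_nonneg_of_le (fun n => abs_nonneg _)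
      (fun n => hbound n t s) hsumm_u
  · have huni := tendstoUniformlyOn_tsum_nat (F := ℝ)
      (f := fun n (p : ℝ × ℝ) => lam (n+1) * φ (n+1) p.1 * φ (n+1) p.2)
      hsumm_u (s := Set.Icc (0:ℝ) T ×ˢ Set.Icc (0:ℝ) T)
      (fun n p _ => by rw [Real.norm_eq_abs]; exact hbound n p.1 p.2)
    refine huni.congr_right fun p hp => ?_
    exact ((h3 p.1 hp.1 p.2 hp.2).tsum_eq)
  · intro t ht s hs
    exact (h3 t ht s hs).tsum_eq
end

section
/- (Markov–Lukács, even-degree case) Let D be a nonnegative even integer and let P be a real polynomial with deg P ≤ D. Then P(x) ≥ 0 for all x ∈ [−1,1] if and only if there exist real polynomials s₁ and s₂, each a sum of squares of real polynomials, with deg s₁ ≤ D and deg s₂ ≤ D − 2 (s₂ = 0 if D < 2), such that P(x) = s₁(x) + (1 − x²)·s₂(x) for all x. -/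
open Polynomial

def IsSOS (s : Polynomial ℝ) : Prop :=
  ∃ (r : ℕ) (q : Fin r → Polynomial ℝ), s = ∑ i, q i ^ 2

namespace IsSOS

lemma zero : IsSOS 0 := ⟨0, ![], by simp⟩

lemma add {s t : Polynomial ℝ} (hs : IsSOS s) (ht : IsSOS t) : IsSOS (s + t) := by
  obtain ⟨m, q, rfl⟩ := hs
  obtain ⟨n, p, rfl⟩ := ht
  exact ⟨m + n, Fin.append q p, by simp [Fin.sum_univ_add]⟩

lemma sq_mul (p : Polynomial ℝ) {t : Polynomial ℝ} (ht : IsSOS t) : IsSOS (p ^ 2 * t) := by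
  obtain ⟨n, q, rfl⟩ := ht
  exact ⟨n, fun i => p * q i, by rw [Finset.mul_sum]; congr 1; ext i; rw [mul_pow]⟩

lemma const {c : ℝ} (hc : 0 ≤ c) : IsSOS (C c) :=
  ⟨1, fun _ => C (Real.sqrt c), by simp [← C_pow, Real.sq_sqrt hc]⟩

lemma const_mul {c : ℝ} (hc : 0 ≤ c) {t : Polynomial ℝ} (ht : IsSOS t) : IsSOS (C c * t) := by
  have : C c * t = (C (Real.sqrt c)) ^ 2 * t := by
    rw [← C_pow, Real.sq_sqrt hc]
  rw [this]; exact sq_mul _ ht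

lemma cmul_sq_mul {c : ℝ} (hc : 0 ≤ c) (p : Polynomial ℝ) {t : Polynomial ℝ} (ht : IsSOS t) :
    IsSOS (C c * (p ^ 2 * t)) := const_mul hc (sq_mul p ht)

lemma eval_nonneg {s : Polynomial ℝ} (hs : IsSOS s) (x : ℝ) : 0 ≤ s.eval x := by
  obtain ⟨n, q, rfl⟩ := hs
  simp only [eval_finset_sum, eval_pow]
  positivity

end IsSOS

lemma deg_term_le {c : ℝ} {p t : Polynomial ℝ} {k m : ℕ}
    (hp : p.natDegree ≤ k) (ht : t.natDegree ≤ m) :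
    (C c * (p ^ 2 * t)).natDegree ≤ 2 * k + m := by
  calc (C c * (p ^ 2 * t)).natDegree ≤ (C c).natDegree + (p ^ 2 * t).natDegree :=
        natDegree_mul_le
    _ ≤ 0 + ((p ^ 2).natDegree + t.natDegree) := by
        simp only [natDegree_C]; exact Nat.add_le_add le_rfl natDegree_mul_le
    _ ≤ 2 * k + m := by
        have := natDegree_pow p 2
        omega

/-- extend nonnegativity over Icc minus one point -/
lemma nonneg_extend {Q : Polynomial ℝ} {r : ℝ}
    (h : ∀ x ∈ Set.Icc (-1 : ℝ) 1, x ≠ r → 0 ≤ Q.eval x) :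
    ∀ x ∈ Set.Icc (-1 : ℝ) 1, 0 ≤ Q.eval x := by
  intro x hx
  rcases eq_or_ne x r with rfl | hne
  · by_contra hneg
    push_neg at hneg
    have hcont : ContinuousAt (fun y => Q.eval y) x := (Q.continuous_aeval).continuousAt
    rw [Metric.continuousAt_iff] at hcont
    obtain ⟨δ, hδ, hball⟩ := hcont (-Q.eval x) (by linarith)
    rcases lt_or_eq_of_le hx.2 with hlt | heq
    · set y := min 1 (x + δ / 2) with hy
      have hxy : x < y := lt_min hlt (by linarith)
      have hy1 : y ∈ Set.Icc (-1 : ℝ) 1 := ⟨by linarith [hx.1], min_le_left _ _⟩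
      have hdist : dist y x < δ := by
        have h2 : y ≤ x + δ / 2 := min_le_right _ _
        rw [Real.dist_eq, abs_of_pos (by linarith)]; linarith
      have h1 := hball hdist
      have hQy := h y hy1 (ne_of_gt hxy)
      rw [Real.dist_eq] at h1
      have := abs_lt.mp h1
      linarith
    · -- x = 1, approach from the left
      set y := max (-1 : ℝ) (x - δ / 2) with hy
      have hxm1 : (-1 : ℝ) < x := by rw [heq]; norm_num
      have hyx : y < x := max_lt hxm1 (by linarith)
      have hy1 : y ∈ Set.Icc (-1 : ℝ) 1 := ⟨le_max_left _ _, heq ▸ hyx.le⟩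
      have hdist : dist y x < δ := by
        have h2 : x - δ / 2 ≤ y := le_max_right _ _
        rw [Real.dist_eq, abs_of_neg (by linarith)]; linarith
      have h1 := hball hdist
      have hQy := h y hy1 (ne_of_lt hyx)
      rw [Real.dist_eq] at h1
      have := abs_lt.mp h1
      linarith
  · exact h x hx hne

def RepE (P : Polynomial ℝ) (n : ℕ) : Prop :=
  ∃ s₁ s₂ : Polynomial ℝ, IsSOS s₁ ∧ IsSOS s₂ ∧ s₁.natDegree ≤ n ∧
    (s₂ = 0 ∨ s₂.natDegree + 2 ≤ n) ∧
    ∀ x : ℝ, P.eval x = s₁.eval x + (1 - x ^ 2) * s₂.eval x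

def RepO (P : Polynomial ℝ) (n : ℕ) : Prop :=
  ∃ s₁ s₂ : Polynomial ℝ, IsSOS s₁ ∧ IsSOS s₂ ∧ s₁.natDegree + 1 ≤ n ∧ s₂.natDegree + 1 ≤ n ∧
    ∀ x : ℝ, P.eval x = (1 + x) * s₁.eval x + (1 - x) * s₂.eval x


lemma deg_add_le₂ {A B : Polynomial ℝ} {c : ℕ} (hA : A.natDegree ≤ c) (hB : B.natDegree ≤ c) :
    (A + B).natDegree ≤ c := (natDegree_add_le _ _).trans (max_le hA hB)

lemma deg_sq_mul_le {p t : Polynomial ℝ} {k : ℕ} (hp : p.natDegree ≤ 1) (ht : t.natDegree ≤ k) :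
    (p ^ 2 * t).natDegree ≤ 2 + k := by
  refine natDegree_mul_le.trans ?_
  have := natDegree_pow p 2
  omega

lemma aux_deg {p t : Polynomial ℝ} {c : ℝ} (hp : p.natDegree ≤ 1) {m : ℕ}
    (ht : t = 0 ∨ t.natDegree + 2 ≤ m) : (C c * (p ^ 2 * t)).natDegree ≤ m := by
  rcases ht with rfl | h
  · simp
  · have := deg_term_le (c := c) hp (le_refl t.natDegree)
    omega

lemma deg_one_sub : (1 - X : Polynomial ℝ).natDegree ≤ 1 := by compute_degree
lemma deg_one_add : (1 + X : Polynomial ℝ).natDegree ≤ 1 := by compute_degree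
lemma deg_C_sub (r : ℝ) : (C r - X : Polynomial ℝ).natDegree ≤ 1 := by compute_degree
lemma deg_sub_C (r : ℝ) : (X - C r : Polynomial ℝ).natDegree ≤ 1 := by compute_degree

lemma RepE.psd_mul {Q : Polynomial ℝ} {a b : ℝ} (hb : 0 ≤ b) {m : ℕ} (h : RepE Q m) :
    RepE (((X - C a) ^ 2 + C b) * Q) (m + 2) := by
  obtain ⟨t₁, t₂, ht₁, ht₂, hd1, hd2, heq⟩ := h
  refine ⟨(X - C a) ^ 2 * t₁ + C b * t₁, (X - C a) ^ 2 * t₂ + C b * t₂,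
    (ht₁.sq_mul _).add (IsSOS.const_mul hb ht₁),
    (ht₂.sq_mul _).add (IsSOS.const_mul hb ht₂), ?_, ?_, ?_⟩
  · exact deg_add_le₂ ((deg_sq_mul_le (deg_sub_C a) hd1).trans (by omega))
      ((natDegree_C_mul_le _ _).trans (by omega))
  · rcases hd2 with rfl | h2
    · left; simp
    · right
      have hA := deg_sq_mul_le (deg_sub_C a) (le_refl t₂.natDegree)
      have hB := natDegree_C_mul_le b t₂
      have := deg_add_le₂ (hA.trans (le_refl _)) (hB.trans (by omega : t₂.natDegree ≤ 2 + t₂.natDegree))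
      omega
  · intro x
    simp only [eval_mul, eval_add, eval_sub, eval_pow, eval_C, eval_X]
    linear_combination (((x : ℝ) - a) ^ 2 + b) * heq x

lemma RepO.psd_mul {Q : Polynomial ℝ} {a b : ℝ} (hb : 0 ≤ b) {m : ℕ} (h : RepO Q m) :
    RepO (((X - C a) ^ 2 + C b) * Q) (m + 2) := by
  obtain ⟨t₁, t₂, ht₁, ht₂, hd1, hd2, heq⟩ := h
  refine ⟨(X - C a) ^ 2 * t₁ + C b * t₁, (X - C a) ^ 2 * t₂ + C b * t₂,
    (ht₁.sq_mul _).add (IsSOS.const_mul hb ht₁),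
    (ht₂.sq_mul _).add (IsSOS.const_mul hb ht₂), ?_, ?_, ?_⟩
  · have := deg_add_le₂ (deg_sq_mul_le (deg_sub_C a) (le_refl t₁.natDegree))
      ((natDegree_C_mul_le b t₁).trans (by omega : t₁.natDegree ≤ 2 + t₁.natDegree))
    omega
  · have := deg_add_le₂ (deg_sq_mul_le (deg_sub_C a) (le_refl t₂.natDegree))
      ((natDegree_C_mul_le b t₂).trans (by omega : t₂.natDegree ≤ 2 + t₂.natDegree))
    omega
  · intro x
    simp only [eval_mul, eval_add, eval_sub, eval_pow, eval_C, eval_X]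
    linear_combination (((x : ℝ) - a) ^ 2 + b) * heq x

/-- multiply an odd rep by (r - x), 1 ≤ r : gives an even rep -/
lemma RepO.r_sub_mul {Q : Polynomial ℝ} {r : ℝ} (hr : 1 ≤ r) {m : ℕ} (h : RepO Q m) :
    RepE ((C r - X) * Q) (m + 1) := by
  obtain ⟨t₁, t₂, ht₁, ht₂, hd1, hd2, heq⟩ := h
  refine ⟨C ((r - 1) / 2) * ((1 + X) ^ 2 * t₁) + C ((r + 1) / 2) * ((1 - X) ^ 2 * t₂),
    C ((r + 1) / 2) * t₁ + C ((r - 1) / 2) * t₂,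
    (IsSOS.cmul_sq_mul (by linarith) _ ht₁).add (IsSOS.cmul_sq_mul (by linarith) _ ht₂),
    (IsSOS.const_mul (by linarith) ht₁).add (IsSOS.const_mul (by linarith) ht₂),
    ?_, ?_, ?_⟩
  · exact deg_add_le₂ ((deg_term_le deg_one_add (le_refl _)).trans (by omega))
      ((deg_term_le deg_one_sub (le_refl _)).trans (by omega))
  · right
    have := deg_add_le₂ ((natDegree_C_mul_le ((r + 1) / 2) t₁).trans
        (by omega : t₁.natDegree ≤ m - 1))
      ((natDegree_C_mul_le ((r - 1) / 2) t₂).trans (by omega : t₂.natDegree ≤ m - 1))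
    omega
  · intro x
    simp only [eval_mul, eval_add, eval_sub, eval_pow, eval_C, eval_X, eval_one]
    linear_combination ((r : ℝ) - x) * heq x

/-- multiply an even rep by (r - x), 1 ≤ r : gives an odd rep -/
lemma RepE.r_sub_mul {Q : Polynomial ℝ} {r : ℝ} (hr : 1 ≤ r) {m : ℕ} (h : RepE Q m) :
    RepO ((C r - X) * Q) (m + 1) := by
  obtain ⟨t₁, t₂, ht₁, ht₂, hd1, hd2, heq⟩ := h
  refine ⟨C ((r - 1) / 2) * t₁ + C ((r + 1) / 2) * ((1 - X) ^ 2 * t₂),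
    C ((r + 1) / 2) * t₁ + C ((r - 1) / 2) * ((1 + X) ^ 2 * t₂),
    (IsSOS.const_mul (by linarith) ht₁).add (IsSOS.cmul_sq_mul (by linarith) _ ht₂),
    (IsSOS.const_mul (by linarith) ht₁).add (IsSOS.cmul_sq_mul (by linarith) _ ht₂),
    ?_, ?_, ?_⟩
  · have := deg_add_le₂ ((natDegree_C_mul_le ((r - 1) / 2) t₁).trans hd1)
      (aux_deg (c := (r + 1) / 2) deg_one_sub hd2)
    omega
  · have := deg_add_le₂ ((natDegree_C_mul_le ((r + 1) / 2) t₁).trans hd1)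
      (aux_deg (c := (r - 1) / 2) deg_one_add hd2)
    omega
  · intro x
    simp only [eval_mul, eval_add, eval_sub, eval_pow, eval_C, eval_X, eval_one]
    linear_combination ((r : ℝ) - x) * heq x

/-- multiply an odd rep by (x - s), s ≤ -1 : gives an even rep -/
lemma RepO.sub_s_mul {Q : Polynomial ℝ} {s : ℝ} (hs : s ≤ -1) {m : ℕ} (h : RepO Q m) :
    RepE ((X - C s) * Q) (m + 1) := by
  obtain ⟨t₁, t₂, ht₁, ht₂, hd1, hd2, heq⟩ := h
  refine ⟨C ((1 - s) / 2) * ((1 + X) ^ 2 * t₁) + C ((-1 - s) / 2) * ((1 - X) ^ 2 * t₂),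
    C ((-1 - s) / 2) * t₁ + C ((1 - s) / 2) * t₂,
    (IsSOS.cmul_sq_mul (by linarith) _ ht₁).add (IsSOS.cmul_sq_mul (by linarith) _ ht₂),
    (IsSOS.const_mul (by linarith) ht₁).add (IsSOS.const_mul (by linarith) ht₂),
    ?_, ?_, ?_⟩
  · exact deg_add_le₂ ((deg_term_le deg_one_add (le_refl _)).trans (by omega))
      ((deg_term_le deg_one_sub (le_refl _)).trans (by omega))
  · right
    have := deg_add_le₂ ((natDegree_C_mul_le ((-1 - s) / 2) t₁).trans
        (by omega : t₁.natDegree ≤ m - 1))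
      ((natDegree_C_mul_le ((1 - s) / 2) t₂).trans (by omega : t₂.natDegree ≤ m - 1))
    omega
  · intro x
    simp only [eval_mul, eval_add, eval_sub, eval_pow, eval_C, eval_X, eval_one]
    linear_combination ((x : ℝ) - s) * heq x

/-- multiply an even rep by (x - s), s ≤ -1 : gives an odd rep -/
lemma RepE.sub_s_mul {Q : Polynomial ℝ} {s : ℝ} (hs : s ≤ -1) {m : ℕ} (h : RepE Q m) :
    RepO ((X - C s) * Q) (m + 1) := by
  obtain ⟨t₁, t₂, ht₁, ht₂, hd1, hd2, heq⟩ := h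
  refine ⟨C ((1 - s) / 2) * t₁ + C ((-1 - s) / 2) * ((1 - X) ^ 2 * t₂),
    C ((-1 - s) / 2) * t₁ + C ((1 - s) / 2) * ((1 + X) ^ 2 * t₂),
    (IsSOS.const_mul (by linarith) ht₁).add (IsSOS.cmul_sq_mul (by linarith) _ ht₂),
    (IsSOS.const_mul (by linarith) ht₁).add (IsSOS.cmul_sq_mul (by linarith) _ ht₂),
    ?_, ?_, ?_⟩
  · have := deg_add_le₂ ((natDegree_C_mul_le ((1 - s) / 2) t₁).trans hd1)
      (aux_deg (c := (-1 - s) / 2) deg_one_sub hd2)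
    omega
  · have := deg_add_le₂ ((natDegree_C_mul_le ((-1 - s) / 2) t₁).trans hd1)
      (aux_deg (c := (1 - s) / 2) deg_one_add hd2)
    omega
  · intro x
    simp only [eval_mul, eval_add, eval_sub, eval_pow, eval_C, eval_X, eval_one]
    linear_combination ((x : ℝ) - s) * heq x

theorem key : ∀ (n : ℕ) (P : Polynomial ℝ), P.natDegree ≤ n →
    (∀ x ∈ Set.Icc (-1 : ℝ) 1, 0 ≤ P.eval x) →
    (Even P.natDegree → RepE P P.natDegree) ∧ (Odd P.natDegree → RepO P P.natDegree) := by
  intro n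
  induction n with
  | zero =>
    intro P hdeg hpos
    constructor
    · intro _
      have hc : P = C (P.coeff 0) := Polynomial.eq_C_of_natDegree_eq_zero (Nat.le_zero.mp hdeg)
      have hc0 : 0 ≤ P.coeff 0 := by
        have := hpos 0 (by norm_num)
        rwa [hc, eval_C] at this
      exact ⟨P, 0, hc ▸ IsSOS.const hc0, IsSOS.zero, hdeg.trans (Nat.zero_le _), Or.inl rfl,
        fun x => by simp⟩
    · intro hodd
      exact absurd hodd (by simp [Nat.le_zero.mp hdeg])
  | succ n IH =>
    intro P hdeg hpos
    rcases Nat.lt_or_ge P.natDegree (n + 1) with hlt | hge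
    · exact IH P (Nat.lt_succ_iff.mp hlt) hpos
    have hnd : P.natDegree = n + 1 := le_antisymm hdeg hge
    have hP0 : P ≠ 0 := fun h => by simp [h] at hnd
    have hdegpos : 0 < P.degree := by
      rw [← Polynomial.natDegree_pos_iff_degree_pos]; omega
    obtain ⟨z, hz⟩ : ∃ z : ℂ, aeval z P = 0 :=
      IsAlgClosed.exists_aeval_eq_zero ℂ P hdegpos.ne'
    rcases eq_or_ne z.im 0 with him | him
    · -- real root r = z.re
      set r := z.re with hrdef
      have hroot : P.eval r = 0 := by
        have hz' : ((r : ℂ)) = z := Complex.ext rfl him.symm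
        rw [← hz'] at hz
        erw [aeval_ofReal, RCLike.ofReal_eq_zero] at hz
        simpa using hz
      rcases le_or_gt 1 r with h1 | h1
      · -- root at or beyond 1
        obtain ⟨Q₀, hQ₀⟩ := dvd_iff_isRoot.mpr hroot
        have hPQ : P = (C r - X) * (-Q₀) := by rw [hQ₀]; ring
        set Q : Polynomial ℝ := -Q₀ with hQdef
        have hQ0 : Q ≠ 0 := by
          intro h; rw [h, mul_zero] at hPQ; exact hP0 hPQ
        have hfacdeg : (C r - X : Polynomial ℝ).natDegree = 1 := by
          have h : (C r - X : Polynomial ℝ) = -(X - C r) := by ring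
          rw [h, natDegree_neg, natDegree_X_sub_C]
        have hfac0 : (C r - X : Polynomial ℝ) ≠ 0 := by
          intro h; rw [h] at hfacdeg; simp at hfacdeg
        have hsum : P.natDegree = 1 + Q.natDegree := by
          rw [hPQ, natDegree_mul hfac0 hQ0, hfacdeg]
        have hQpos : ∀ x ∈ Set.Icc (-1 : ℝ) 1, 0 ≤ Q.eval x := by
          apply nonneg_extend (r := r)
          intro x hx hne
          have hPx : P.eval x = (r - x) * Q.eval x := by rw [hPQ]; simp
          have h0 := hpos x hx
          have hrx : 0 < r - x := by
            have := lt_of_le_of_ne (hx.2.trans h1) hne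
            linarith
          nlinarith [h0, hrx]
        have hIH := IH Q (by omega) hQpos
        constructor
        · intro hEv
          have hQodd : Odd Q.natDegree := by
            rw [Nat.even_iff] at hEv; rw [Nat.odd_iff]; omega
          have hrep := (hIH.2 hQodd).r_sub_mul h1
          have hl : Q.natDegree + 1 = P.natDegree := by omega
          rw [← hl, hPQ]
          exact hrep
        · intro hOdd
          have hQev : Even Q.natDegree := by
            rw [Nat.odd_iff] at hOdd; rw [Nat.even_iff]; omega
          have hrep := (hIH.1 hQev).r_sub_mul h1
          have hl : Q.natDegree + 1 = P.natDegree := by omega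
          rw [← hl, hPQ]
          exact hrep
      rcases le_or_gt r (-1) with h2 | h2
      · -- root at or below -1
        obtain ⟨Q, hPQ⟩ := dvd_iff_isRoot.mpr hroot
        have hQ0 : Q ≠ 0 := by
          intro h; rw [h, mul_zero] at hPQ; exact hP0 hPQ
        have hfac0 : (X - C r : Polynomial ℝ) ≠ 0 := X_sub_C_ne_zero r
        have hsum : P.natDegree = 1 + Q.natDegree := by
          rw [hPQ, natDegree_mul hfac0 hQ0, natDegree_X_sub_C]
        have hQpos : ∀ x ∈ Set.Icc (-1 : ℝ) 1, 0 ≤ Q.eval x := by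
          apply nonneg_extend (r := r)
          intro x hx hne
          have hPx : P.eval x = (x - r) * Q.eval x := by rw [hPQ]; simp
          have h0 := hpos x hx
          have hrx : 0 < x - r := by
            have := lt_of_le_of_ne (h2.trans hx.1) (Ne.symm hne)
            linarith
          nlinarith [h0, hrx]
        have hIH := IH Q (by omega) hQpos
        constructor
        · intro hEv
          have hQodd : Odd Q.natDegree := by
            rw [Nat.even_iff] at hEv; rw [Nat.odd_iff]; omega
          have hrep := (hIH.2 hQodd).sub_s_mul h2
          have hl : Q.natDegree + 1 = P.natDegree := by omega
          rw [← hl, hPQ]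
          exact hrep
        · intro hOdd
          have hQev : Even Q.natDegree := by
            rw [Nat.odd_iff] at hOdd; rw [Nat.even_iff]; omega
          have hrep := (hIH.1 hQev).sub_s_mul h2
          have hl : Q.natDegree + 1 = P.natDegree := by omega
          rw [← hl, hPQ]
          exact hrep
      · -- interior root: double
        have hmin : IsLocalMin (fun x => P.eval x) r := by
          have hIcc : Set.Icc (-1 : ℝ) 1 ∈ nhds r := Icc_mem_nhds h2 h1
          refine Filter.eventually_of_mem hIcc fun x hx => ?_
          simpa [hroot] using hpos x hx
        have hderiv : P.derivative.eval r = 0 := by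
          have h := hmin.deriv_eq_zero
          rwa [Polynomial.deriv] at h
        obtain ⟨Q₀, hQ₀⟩ := dvd_iff_isRoot.mpr hroot
        have hd : P.derivative = Q₀ + (X - C r) * Q₀.derivative := by
          rw [hQ₀, derivative_mul, derivative_sub, derivative_X, derivative_C]; ring
        have hQ₀r : Q₀.eval r = 0 := by
          have h := congrArg (eval r) hd
          rw [hderiv] at h
          simp only [eval_add, eval_mul, eval_sub, eval_X, eval_C, sub_self, zero_mul,
            add_zero] at h
          exact h.symm
        obtain ⟨Q, hq⟩ := dvd_iff_isRoot.mpr hQ₀r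
        have hPQ : P = ((X - C r) ^ 2 + C 0) * Q := by rw [hQ₀, hq, C_0]; ring
        have hQ0 : Q ≠ 0 := by
          intro h; rw [h, mul_zero] at hPQ; exact hP0 hPQ
        have hfacdeg : ((X - C r) ^ 2 + C 0 : Polynomial ℝ).natDegree = 2 := by
          rw [C_0, add_zero, natDegree_pow, natDegree_X_sub_C]
        have hfac0 : ((X - C r) ^ 2 + C 0 : Polynomial ℝ) ≠ 0 := by
          intro h; rw [h] at hfacdeg; simp at hfacdeg
        have hsum : P.natDegree = 2 + Q.natDegree := by
          rw [hPQ, natDegree_mul hfac0 hQ0, hfacdeg]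
        have hQpos : ∀ x ∈ Set.Icc (-1 : ℝ) 1, 0 ≤ Q.eval x := by
          apply nonneg_extend (r := r)
          intro x hx hne
          have hPx : P.eval x = ((x - r) ^ 2 + 0) * Q.eval x := by rw [hPQ]; simp
          have h0 := hpos x hx
          have hx2 : 0 < (x - r) ^ 2 := by
            have : x - r ≠ 0 := sub_ne_zero.mpr hne
            positivity
          nlinarith [h0, hx2]
        have hIH := IH Q (by omega) hQpos
        constructor
        · intro hEv
          have hQev : Even Q.natDegree := by
            rw [Nat.even_iff] at hEv ⊢; omega
          have hrep := (hIH.1 hQev).psd_mul (a := r) (le_refl (0 : ℝ))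
          have hl : Q.natDegree + 2 = P.natDegree := by omega
          rw [← hl, hPQ]
          exact hrep
        · intro hOdd
          have hQodd : Odd Q.natDegree := by
            rw [Nat.odd_iff] at hOdd ⊢; omega
          have hrep := (hIH.2 hQodd).psd_mul (a := r) (le_refl (0 : ℝ))
          have hl : Q.natDegree + 2 = P.natDegree := by omega
          rw [← hl, hPQ]
          exact hrep
    · -- nonreal root: quadratic factor
      obtain ⟨Q, hPQ₀⟩ := P.quadratic_dvd_of_aeval_eq_zero_im_ne_zero hz him
      have hnorm : ‖z‖ ^ 2 = z.re ^ 2 + z.im ^ 2 := by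
        rw [Complex.sq_norm, Complex.normSq_apply]; ring
      have hqid : (X ^ 2 - C (2 * z.re) * X + C (‖z‖ ^ 2) : Polynomial ℝ)
          = (X - C z.re) ^ 2 + C (z.im ^ 2) := by
        rw [hnorm, C_add, C_pow, C_pow, show (2 : ℝ) * z.re = z.re + z.re by ring, C_add]
        ring
      rw [hqid] at hPQ₀
      have hPQ : P = ((X - C z.re) ^ 2 + C (z.im ^ 2)) * Q := hPQ₀
      have him2 : 0 < z.im ^ 2 := by
        rcases him.lt_or_gt with h | h <;> nlinarith
      have hQ0 : Q ≠ 0 := by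
        intro h; rw [h, mul_zero] at hPQ; exact hP0 hPQ
      have hfacdeg : ((X - C z.re) ^ 2 + C (z.im ^ 2) : Polynomial ℝ).natDegree = 2 := by
        compute_degree!
      have hfac0 : ((X - C z.re) ^ 2 + C (z.im ^ 2) : Polynomial ℝ) ≠ 0 := by
        intro h; rw [h] at hfacdeg; simp at hfacdeg
      have hsum : P.natDegree = 2 + Q.natDegree := by
        rw [hPQ, natDegree_mul hfac0 hQ0, hfacdeg]
      have hQpos : ∀ x ∈ Set.Icc (-1 : ℝ) 1, 0 ≤ Q.eval x := by
        intro x hx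
        have hPx : P.eval x = ((x - z.re) ^ 2 + z.im ^ 2) * Q.eval x := by rw [hPQ]; simp
        have h0 := hpos x hx
        nlinarith [sq_nonneg (x - z.re), him2, h0]
      have hIH := IH Q (by omega) hQpos
      constructor
      · intro hEv
        have hQev : Even Q.natDegree := by
          rw [Nat.even_iff] at hEv ⊢; omega
        have hrep := (hIH.1 hQev).psd_mul (a := z.re) him2.le
        have hl : Q.natDegree + 2 = P.natDegree := by omega
        rw [← hl, hPQ]
        exact hrep
      · intro hOdd
        have hQodd : Odd Q.natDegree := by
          rw [Nat.odd_iff] at hOdd ⊢; omega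
        have hrep := (hIH.2 hQodd).psd_mul (a := z.re) him2.le
        have hl : Q.natDegree + 2 = P.natDegree := by omega
        rw [← hl, hPQ]
        exact hrep


theorem markov_lukacs_even
    (D : ℕ) (hD : Even D) (P : Polynomial ℝ) (hdeg : P.natDegree ≤ D) :
    (∀ x ∈ Set.Icc (-1 : ℝ) 1, 0 ≤ P.eval x) ↔
      ∃ s₁ s₂ : Polynomial ℝ,
        IsSOS s₁ ∧ IsSOS s₂ ∧
        s₁.natDegree ≤ D ∧ s₂.natDegree ≤ D - 2 ∧
        (D < 2 → s₂ = 0) ∧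
        ∀ x : ℝ, P.eval x = s₁.eval x + (1 - x ^ 2) * s₂.eval x := by
  constructor
  · intro hpos
    have hkey := key P.natDegree P le_rfl hpos
    have hD2 := hD
    rw [Nat.even_iff] at hD2
    rcases Nat.even_or_odd P.natDegree with he | ho
    · obtain ⟨s₁, s₂, h1, h2, hd1, hd2, heq⟩ := hkey.1 he
      refine ⟨s₁, s₂, h1, h2, hd1.trans hdeg, ?_, ?_, heq⟩
      · rcases hd2 with rfl | h
        · simp
        · omega
      · intro hlt
        rcases hd2 with rfl | h
        · rfl
        · exact absurd hlt (by omega)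
    · obtain ⟨s₁, s₂, h1, h2, hd1, hd2, heq⟩ := hkey.2 ho
      have hndD : P.natDegree + 1 ≤ D := by
        rw [Nat.odd_iff] at ho; omega
      have hhalf : (0 : ℝ) ≤ 1 / 2 := by norm_num
      refine ⟨C (1 / 2 : ℝ) * ((1 + X) ^ 2 * s₁) + C (1 / 2 : ℝ) * ((1 - X) ^ 2 * s₂),
        C (1 / 2 : ℝ) * s₁ + C (1 / 2 : ℝ) * s₂,
        (IsSOS.cmul_sq_mul hhalf _ h1).add (IsSOS.cmul_sq_mul hhalf _ h2),
        (IsSOS.const_mul hhalf h1).add (IsSOS.const_mul hhalf h2), ?_, ?_, ?_, ?_⟩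
      · exact deg_add_le₂ ((deg_term_le deg_one_add (le_refl _)).trans (by omega))
          ((deg_term_le deg_one_sub (le_refl _)).trans (by omega))
      · have := deg_add_le₂
          ((natDegree_C_mul_le (1 / 2 : ℝ) s₁).trans (by omega : s₁.natDegree ≤ D - 2))
          ((natDegree_C_mul_le (1 / 2 : ℝ) s₂).trans (by omega : s₂.natDegree ≤ D - 2))
        exact this
      · intro hlt
        exact absurd hlt (by omega)
      · intro x
        simp only [eval_mul, eval_add, eval_sub, eval_pow, eval_C, eval_X, eval_one]
        linear_combination heq x
  · rintro ⟨s₁, s₂, h1, h2, -, -, -, heq⟩ x hx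
    rw [heq x]
    have e1 := h1.eval_nonneg x
    have e2 := h2.eval_nonneg x
    have h3 : 0 ≤ 1 - x ^ 2 := by nlinarith [hx.1, hx.2]
    exact add_nonneg e1 (mul_nonneg h3 e2)
end

section
/- (Markov–Lukács, odd-degree case) Let D be a positive odd integer and let P be a real polynomial with deg P ≤ D. Then P(x) ≥ 0 for all x ∈ [−1,1] if and only if there exist real polynomials s₁ and s₂, each a sum of squares of real polynomials, with deg s₁ ≤ D − 1 and deg s₂ ≤ D − 1, such that P(x) = (1 + x)·s₁(x) + (1 − x)·s₂(x) for all x. -/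
open Polynomial


lemma ml_eval_conj (p : Polynomial ℝ) (z : ℂ) :
    (p.map (algebraMap ℝ ℂ)).eval ((starRingEnd ℂ) z) =
      (starRingEnd ℂ) ((p.map (algebraMap ℝ ℂ)).eval z) := by
  rw [eval_map, eval_map, eval₂_eq_sum_range, eval₂_eq_sum_range, map_sum]
  refine Finset.sum_congr rfl fun i _ => ?_
  simp [Complex.conj_ofReal]

lemma ml_quad_dvd (p : Polynomial ℝ) (z : ℂ) (hz : z.im ≠ 0)
    (hroot : (p.map (algebraMap ℝ ℂ)).eval z = 0) :
    ((X - C z.re) ^ 2 + C z.im ^ 2) ∣ p := by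
  set Φ : Polynomial ℝ := (X - C z.re) ^ 2 + C z.im ^ 2 with hΦ
  rw [← map_dvd_map' (algebraMap ℝ ℂ)]
  have hmap : Φ.map (algebraMap ℝ ℂ) = (X - C z) * (X - C ((starRingEnd ℂ) z)) := by
    apply Polynomial.funext
    intro w
    have h1 : z + (starRingEnd ℂ) z = 2 * (z.re:ℂ) := by push_cast [Complex.add_conj z]; ring
    have h2 : z * (starRingEnd ℂ) z = (z.re : ℂ) ^ 2 + (z.im : ℂ) ^ 2 := by
      rw [Complex.mul_conj]
      push_cast [Complex.normSq_apply]
      ring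
    simp only [hΦ, Polynomial.map_add, Polynomial.map_pow, Polynomial.map_sub, map_X, map_C,
      eval_add, eval_pow, eval_sub, eval_X, eval_C, eval_mul, Complex.coe_algebraMap]
    linear_combination w * h1 - h2
  rw [hmap]
  have hne : z ≠ (starRingEnd ℂ) z := by
    intro h
    apply hz
    have := congrArg Complex.im h
    simp only [Complex.conj_im] at this
    linarith
  refine (isCoprime_X_sub_C_of_isUnit_sub ?_).mul_dvd ?_ ?_
  · exact (sub_ne_zero_of_ne hne).isUnit
  · exact dvd_iff_isRoot.mpr hroot
  · exact dvd_iff_isRoot.mpr (by rw [IsRoot, ml_eval_conj, hroot, map_zero])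

lemma ml_eval_nonneg_of_right (q : Polynomial ℝ) (r : ℝ)
    (h : ∀ x, r < x → 0 ≤ q.eval x) : 0 ≤ q.eval r := by
  have ht : Filter.Tendsto (fun x => q.eval x) (nhdsWithin r (Set.Ioi r)) (nhds (q.eval r)) :=
    (q.continuous_aeval.tendsto r).mono_left nhdsWithin_le_nhds
  exact ge_of_tendsto ht (Filter.eventually_of_mem self_mem_nhdsWithin (fun x hx => h x hx))

lemma ml_eval_nonpos_of_left (q : Polynomial ℝ) (r : ℝ)
    (h : ∀ x, x < r → q.eval x ≤ 0) : q.eval r ≤ 0 := by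
  have ht : Filter.Tendsto (fun x => q.eval x) (nhdsWithin r (Set.Iio r)) (nhds (q.eval r)) :=
    (q.continuous_aeval.tendsto r).mono_left nhdsWithin_le_nhds
  exact le_of_tendsto ht (Filter.eventually_of_mem self_mem_nhdsWithin (fun x hx => h x hx))

lemma ml_sum_two_sq : ∀ (n : ℕ) (p : Polynomial ℝ), p.natDegree ≤ n →
    (∀ x : ℝ, 0 ≤ p.eval x) → ∃ f g : Polynomial ℝ, p = f ^ 2 + g ^ 2 := by
  intro n
  induction n using Nat.strong_induction_on with
  | _ n ih =>
    intro p hdeg hpos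
    by_cases hp0 : p = 0
    · exact ⟨0, 0, by simp [hp0]⟩
    by_cases hdeg0 : p.natDegree = 0
    · obtain ⟨a, ha⟩ := natDegree_eq_zero.mp hdeg0
      have ha0 : 0 ≤ a := by have := hpos 0; rw [← ha] at this; simpa using this
      exact ⟨C (Real.sqrt a), 0, by rw [← ha, ← C_pow, Real.sq_sqrt ha0]; simp⟩
    by_cases hroot : ∃ r : ℝ, p.eval r = 0
    · obtain ⟨r, hr⟩ := hroot
      obtain ⟨q, hq⟩ := dvd_iff_isRoot.mpr hr
      have hqr : q.eval r = 0 := by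
        have h1 : 0 ≤ q.eval r := by
          apply ml_eval_nonneg_of_right
          intro x hx
          have hx2 := hpos x
          rw [hq, eval_mul, eval_sub, eval_X, eval_C] at hx2
          exact (mul_nonneg_iff_of_pos_left (by linarith)).mp hx2
        have h2 : q.eval r ≤ 0 := by
          apply ml_eval_nonpos_of_left
          intro x hx
          have hx2 := hpos x
          rw [hq, eval_mul, eval_sub, eval_X, eval_C] at hx2
          nlinarith
        linarith
      obtain ⟨q2, hq2⟩ := dvd_iff_isRoot.mpr hqr
      have hp : p = (X - C r) ^ 2 * q2 := by rw [hq, hq2]; ring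
      have hq2ne : q2 ≠ 0 := by intro h; exact hp0 (by rw [hp, h, mul_zero])
      have hq2pos : ∀ x : ℝ, 0 ≤ q2.eval x := by
        intro x
        rcases eq_or_ne x r with rfl | hxr
        · apply ml_eval_nonneg_of_right
          intro y hy
          have hy2 := hpos y
          rw [hp, eval_mul, eval_pow, eval_sub, eval_X, eval_C] at hy2
          have h3 := mul_pos (sub_pos.mpr hy) (sub_pos.mpr hy)
          rw [← pow_two] at h3
          exact (mul_nonneg_iff_of_pos_left h3).mp hy2
        · have hx2 := hpos x
          rw [hp, eval_mul, eval_pow, eval_sub, eval_X, eval_C] at hx2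
          have hsub : x - r ≠ 0 := sub_ne_zero_of_ne hxr
          exact (mul_nonneg_iff_of_pos_left (by positivity)).mp hx2
      have hdq : q2.natDegree + 2 = p.natDegree := by
        rw [hp, natDegree_mul (pow_ne_zero 2 (X_sub_C_ne_zero r)) hq2ne]
        have h2 : ((X - C r) ^ 2 : Polynomial ℝ).natDegree = 2 := by
          simp [natDegree_pow]
        omega
      obtain ⟨f, g, hfg⟩ := ih q2.natDegree (by omega) q2 le_rfl hq2pos
      exact ⟨(X - C r) * f, (X - C r) * g, by rw [hp, hfg]; ring⟩
    · push_neg at hroot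
      have hdegpos : 0 < p.degree := natDegree_pos_iff_degree_pos.mp (Nat.pos_of_ne_zero hdeg0)
      have hmapdeg : (p.map (algebraMap ℝ ℂ)).degree ≠ 0 := by
        rw [degree_map_eq_of_injective (algebraMap ℝ ℂ).injective]
        exact ne_of_gt hdegpos
      obtain ⟨z, hz⟩ := IsAlgClosed.exists_root _ hmapdeg
      have him : z.im ≠ 0 := by
        intro h0
        apply hroot z.re
        have hz' : (p.map (algebraMap ℝ ℂ)).eval ((algebraMap ℝ ℂ) z.re) = 0 := by
          have hzz : z = (algebraMap ℝ ℂ) z.re := by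
            apply Complex.ext <;> simp [h0]
          rwa [← hzz]
        rw [eval_map, eval₂_at_apply] at hz'
        exact (algebraMap ℝ ℂ).injective (by simpa using hz')
      obtain ⟨q, hq⟩ := ml_quad_dvd p z him hz
      have hΦpos : ∀ x : ℝ, 0 < ((X - C z.re) ^ 2 + C z.im ^ 2 : Polynomial ℝ).eval x := by
        intro x
        simp only [eval_add, eval_pow, eval_sub, eval_X, eval_C]
        have h1 : 0 < z.im ^ 2 := by positivity
        nlinarith [sq_nonneg (x - z.re)]
      have hqne : q ≠ 0 := by intro h; exact hp0 (by rw [hq, h, mul_zero])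
      have hqpos : ∀ x : ℝ, 0 ≤ q.eval x := by
        intro x
        have hx2 := hpos x
        rw [hq, eval_mul] at hx2
        exact (mul_nonneg_iff_of_pos_left (hΦpos x)).mp hx2
      have hΦdeg : ((X - C z.re) ^ 2 + C z.im ^ 2 : Polynomial ℝ).natDegree = 2 := by
        compute_degree!
      have hdq : q.natDegree + 2 = p.natDegree := by
        rw [hq, natDegree_mul (fun h => by simpa [h] using hΦpos 0) hqne, hΦdeg]
        omega
      obtain ⟨f, g, hfg⟩ := ih q.natDegree (by omega) q le_rfl hqpos
      refine ⟨(X - C z.re) * f - C z.im * g, (X - C z.re) * g + C z.im * f, ?_⟩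
      rw [hq, hfg]; ring


lemma ml_sum_range_even_odd (u : ℕ → ℝ) (n : ℕ) :
    ∑ i ∈ Finset.range (2 * n), u i =
      ∑ k ∈ Finset.range n, u (2 * k) + ∑ k ∈ Finset.range n, u (2 * k + 1) := by
  induction n with
  | zero => simp
  | succ n ihn =>
    have h : 2 * (n + 1) = (2 * n) + 1 + 1 := by ring
    rw [h, Finset.sum_range_succ, Finset.sum_range_succ, ihn, Finset.sum_range_succ,
      Finset.sum_range_succ]
    ring

noncomputable def mlT (n : ℕ) (q : Polynomial ℝ) : Polynomial ℝ :=
  ∑ k ∈ Finset.range (n + 1), C (q.coeff k) * (1 - X) ^ k * (1 + X) ^ (n - k)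

lemma mlT_natDegree (n : ℕ) (q : Polynomial ℝ) : (mlT n q).natDegree ≤ n := by
  apply natDegree_sum_le_of_forall_le
  intro k hk
  rw [Finset.mem_range] at hk
  calc (C (q.coeff k) * (1 - X) ^ k * (1 + X) ^ (n - k)).natDegree
      ≤ (C (q.coeff k) * (1 - X) ^ k).natDegree + ((1 + X : Polynomial ℝ) ^ (n - k)).natDegree :=
        natDegree_mul_le
    _ ≤ ((C (q.coeff k)).natDegree + ((1 - X : Polynomial ℝ) ^ k).natDegree) +
        ((1 + X : Polynomial ℝ) ^ (n - k)).natDegree := by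
        exact Nat.add_le_add_right natDegree_mul_le _
    _ ≤ (0 + k * 1) + (n - k) * 1 := by
        refine Nat.add_le_add (Nat.add_le_add ?_ ?_) ?_
        · simp
        · exact natDegree_pow_le.trans (by
            have : (1 - X : Polynomial ℝ).natDegree ≤ 1 := by compute_degree
            exact Nat.mul_le_mul_left k this)
        · exact natDegree_pow_le.trans (by
            have : (1 + X : Polynomial ℝ).natDegree ≤ 1 := by compute_degree
            exact Nat.mul_le_mul_left (n - k) this)
    _ ≤ n := by omega

lemma mlT_eval (n : ℕ) (q : Polynomial ℝ) (hq : q.natDegree ≤ n) (x : ℝ) (hx : 1 + x ≠ 0) :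
    (mlT n q).eval x = (1 + x) ^ n * q.eval ((1 - x) / (1 + x)) := by
  rw [mlT, eval_finset_sum, eval_eq_sum_range' (lt_of_le_of_lt hq (Nat.lt_succ_self n)),
    Finset.mul_sum]
  refine Finset.sum_congr rfl fun k hk => ?_
  rw [Finset.mem_range] at hk
  simp only [eval_mul, eval_pow, eval_sub, eval_add, eval_one, eval_X, eval_C]
  rw [div_pow, pow_sub₀ _ hx (by omega : k ≤ n)]
  field_simp

noncomputable def mlEv (m : ℕ) (f : Polynomial ℝ) : Polynomial ℝ :=
  ∑ k ∈ Finset.range (m + 1), C (f.coeff (2 * k)) * X ^ k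

noncomputable def mlOd (m : ℕ) (f : Polynomial ℝ) : Polynomial ℝ :=
  ∑ k ∈ Finset.range (m + 1), C (f.coeff (2 * k + 1)) * X ^ k

lemma mlEv_natDegree (m : ℕ) (f : Polynomial ℝ) : (mlEv m f).natDegree ≤ m := by
  apply natDegree_sum_le_of_forall_le
  intro k hk
  rw [Finset.mem_range] at hk
  calc (C (f.coeff (2 * k)) * X ^ k).natDegree ≤ 0 + k := by
        refine natDegree_mul_le.trans (Nat.add_le_add (by simp) ?_)
        simpa using natDegree_pow_le (p := (X : Polynomial ℝ)) (n := k)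
    _ ≤ m := by omega

lemma mlOd_natDegree (m : ℕ) (f : Polynomial ℝ) : (mlOd m f).natDegree ≤ m := by
  apply natDegree_sum_le_of_forall_le
  intro k hk
  rw [Finset.mem_range] at hk
  calc (C (f.coeff (2 * k + 1)) * X ^ k).natDegree ≤ 0 + k := by
        refine natDegree_mul_le.trans (Nat.add_le_add (by simp) ?_)
        simpa using natDegree_pow_le (p := (X : Polynomial ℝ)) (n := k)
    _ ≤ m := by omega

lemma ml_even_odd_eval (m : ℕ) (f : Polynomial ℝ) (hf : f.natDegree ≤ 2 * m + 1) (t : ℝ) :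
    f.eval t = (mlEv m f).eval (t ^ 2) + t * (mlOd m f).eval (t ^ 2) := by
  rw [eval_eq_sum_range' (show f.natDegree < 2 * (m + 1) by omega) t,
    ml_sum_range_even_odd (fun i => f.coeff i * t ^ i) (m + 1)]
  rw [mlEv, mlOd, eval_finset_sum, eval_finset_sum, Finset.mul_sum]
  congr 1
  · refine Finset.sum_congr rfl fun k _ => ?_
    simp [pow_mul]
  · refine Finset.sum_congr rfl fun k _ => ?_
    simp only [eval_mul, eval_pow, eval_C, eval_X]
    rw [pow_succ', pow_mul]
    ring

lemma ml_coeff_sq_add_sq_ne (f g : Polynomial ℝ) (hf : f ≠ 0) (hle : g.natDegree ≤ f.natDegree) :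
    (f ^ 2 + g ^ 2).coeff (2 * f.natDegree) ≠ 0 := by
  have h1 : (f ^ 2).coeff (2 * f.natDegree) = f.leadingCoeff ^ 2 := by
    rw [show 2 * f.natDegree = (f ^ 2).natDegree from (natDegree_pow f 2).symm,
      coeff_natDegree, leadingCoeff_pow]
  rw [coeff_add, h1]
  have hlc := leadingCoeff_ne_zero.mpr hf
  rcases lt_or_eq_of_le hle with hlt | heq
  · have h2 : (g ^ 2).coeff (2 * f.natDegree) = 0 := by
      apply coeff_eq_zero_of_natDegree_lt
      rw [natDegree_pow]
      omega
    rw [h2, add_zero]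
    exact pow_ne_zero 2 hlc
  · have h2 : (g ^ 2).coeff (2 * f.natDegree) = g.leadingCoeff ^ 2 := by
      rw [← heq, show 2 * g.natDegree = (g ^ 2).natDegree from (natDegree_pow g 2).symm,
        coeff_natDegree, leadingCoeff_pow]
    rw [h2]
    positivity

lemma ml_natDegree_le_of_sq_add_sq (f g h : Polynomial ℝ) (hfg : h = f ^ 2 + g ^ 2) :
    2 * f.natDegree ≤ h.natDegree := by
  by_cases hf : f = 0
  · simp [hf]
  rcases le_or_gt g.natDegree f.natDegree with hle | hlt
  · exact le_natDegree_of_ne_zero (by rw [hfg]; exact ml_coeff_sq_add_sq_ne f g hf hle)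
  · have hg : g ≠ 0 := by
      intro h0
      rw [h0, natDegree_zero] at hlt
      omega
    have := le_natDegree_of_ne_zero (n := 2 * g.natDegree) (p := h)
      (by rw [hfg, add_comm (f ^ 2)]; exact ml_coeff_sq_add_sq_ne g f hg hlt.le)
    omega


lemma ml_isSOS_eval_nonneg {s : Polynomial ℝ} (hs : IsSOS s) (x : ℝ) : 0 ≤ s.eval x := by
  obtain ⟨r, q, rfl⟩ := hs
  rw [eval_finset_sum]
  exact Finset.sum_nonneg fun i _ => by rw [eval_pow]; exact sq_nonneg _

theorem markov_lukacs_odd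
    (D : ℕ) (hD : Odd D) (hDpos : 0 < D) (P : Polynomial ℝ) (hdeg : P.natDegree ≤ D) :
    (∀ x ∈ Set.Icc (-1 : ℝ) 1, 0 ≤ P.eval x) ↔
      ∃ s₁ s₂ : Polynomial ℝ,
        IsSOS s₁ ∧ IsSOS s₂ ∧
        s₁.natDegree ≤ D - 1 ∧ s₂.natDegree ≤ D - 1 ∧
        ∀ x : ℝ, P.eval x = (1 + x) * s₁.eval x + (1 - x) * s₂.eval x := by
  obtain ⟨m, hm⟩ := hD
  constructor
  · intro hpos
    set Q := mlT D P with hQ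
    have hQpos : ∀ t : ℝ, 0 ≤ t → 0 ≤ Q.eval t := by
      intro t ht
      rw [hQ, mlT_eval D P hdeg t (by linarith)]
      apply mul_nonneg (by positivity)
      apply hpos
      constructor
      · rw [le_div_iff₀ (by linarith)]; linarith
      · rw [div_le_iff₀ (by linarith)]; linarith
    set QQ := Q.comp (X ^ 2) with hQQ
    have hQQdeg : QQ.natDegree ≤ 2 * D := by
      rw [hQQ, natDegree_comp, natDegree_pow, natDegree_X]
      have := mlT_natDegree D P
      calc Q.natDegree * (2 * 1) ≤ D * (2 * 1) := by
            exact Nat.mul_le_mul_right _ this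
        _ = 2 * D := by ring
    have hQQpos : ∀ t : ℝ, 0 ≤ QQ.eval t := by
      intro t
      rw [hQQ, eval_comp, eval_pow, eval_X]
      exact hQpos (t ^ 2) (sq_nonneg t)
    obtain ⟨f, g, hfg⟩ := ml_sum_two_sq (2 * D) QQ hQQdeg hQQpos
    have hfdeg : f.natDegree ≤ 2 * m + 1 := by
      have := ml_natDegree_le_of_sq_add_sq f g QQ hfg
      omega
    have hgdeg : g.natDegree ≤ 2 * m + 1 := by
      have := ml_natDegree_le_of_sq_add_sq g f QQ (by rw [hfg]; ring)
      omega
    -- even/odd parts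
    have key : ∀ y : ℝ, 0 ≤ y → Q.eval y =
        ((mlEv m f).eval y ^ 2 + (mlEv m g).eval y ^ 2) +
          y * ((mlOd m f).eval y ^ 2 + (mlOd m g).eval y ^ 2) := by
      intro y hy
      set t := Real.sqrt y with htdef
      have ht2 : t ^ 2 = y := Real.sq_sqrt hy
      have e1 : Q.eval y = f.eval t ^ 2 + g.eval t ^ 2 := by
        have : QQ.eval t = Q.eval y := by rw [hQQ, eval_comp, eval_pow, eval_X, ht2]
        rw [← this, hfg, eval_add, eval_pow, eval_pow]
      have e2 : Q.eval y = f.eval (-t) ^ 2 + g.eval (-t) ^ 2 := by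
        have h2 : (-t) ^ 2 = y := by rw [neg_pow]; simpa using ht2
        have : QQ.eval (-t) = Q.eval y := by rw [hQQ, eval_comp, eval_pow, eval_X, h2]
        rw [← this, hfg, eval_add, eval_pow, eval_pow]
      have hf1 := ml_even_odd_eval m f hfdeg t
      have hf2 := ml_even_odd_eval m f hfdeg (-t)
      have hg1 := ml_even_odd_eval m g hgdeg t
      have hg2 := ml_even_odd_eval m g hgdeg (-t)
      have hnt : (-t) ^ 2 = t ^ 2 := by ring
      rw [hnt] at hf2 hg2
      rw [hf1, hg1] at e1
      rw [hf2, hg2] at e2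
      rw [ht2] at e1 e2
      nlinarith [e1, e2, ht2]
    set c : ℝ := (Real.sqrt 2 ^ D)⁻¹ with hcdef
    have hc2 : c ^ 2 * 2 ^ D = 1 := by
      have hs : Real.sqrt 2 ^ 2 = 2 := Real.sq_sqrt (by norm_num)
      have hc : c ^ 2 = ((2 : ℝ) ^ D)⁻¹ := by
        rw [hcdef, ← inv_pow, ← pow_mul, mul_comm D 2, pow_mul, inv_pow, hs, inv_pow]
      rw [hc, inv_mul_cancel₀ (by positivity)]
    clear_value c
    refine ⟨(C c * mlT m (mlEv m f)) ^ 2 + (C c * mlT m (mlEv m g)) ^ 2,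
      (C c * mlT m (mlOd m f)) ^ 2 + (C c * mlT m (mlOd m g)) ^ 2,
      ⟨2, ![C c * mlT m (mlEv m f), C c * mlT m (mlEv m g)], by simp [Fin.sum_univ_two]⟩,
      ⟨2, ![C c * mlT m (mlOd m f), C c * mlT m (mlOd m g)], by simp [Fin.sum_univ_two]⟩,
      ?_, ?_, ?_⟩
    · have hb : ∀ u : Polynomial ℝ, u.natDegree ≤ m → ((C c * u) ^ 2).natDegree ≤ D - 1 := by
        intro u hu
        have h1 : (C c * u).natDegree ≤ m := natDegree_mul_le.trans (by simpa using hu)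
        refine natDegree_pow_le.trans ?_
        omega
      exact natDegree_add_le_of_degree_le (hb _ (mlT_natDegree m (mlEv m f)))
        (hb _ (mlT_natDegree m (mlEv m g)))
    · have hb : ∀ u : Polynomial ℝ, u.natDegree ≤ m → ((C c * u) ^ 2).natDegree ≤ D - 1 := by
        intro u hu
        have h1 : (C c * u).natDegree ≤ m := natDegree_mul_le.trans (by simpa using hu)
        refine natDegree_pow_le.trans ?_
        omega
      exact natDegree_add_le_of_degree_le (hb _ (mlT_natDegree m (mlOd m f)))
        (hb _ (mlT_natDegree m (mlOd m g)))
    · -- the evaluation identity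
      set s₁ := (C c * mlT m (mlEv m f)) ^ 2 + (C c * mlT m (mlEv m g)) ^ 2 with hs1
      set s₂ := (C c * mlT m (mlOd m f)) ^ 2 + (C c * mlT m (mlOd m g)) ^ 2 with hs2
      have hpoint : ∀ x ∈ Set.Ioo (0 : ℝ) 1,
          P.eval x = ((1 + X) * s₁ + (1 - X) * s₂).eval x := by
        intro x hx
        obtain ⟨hx0, hx1⟩ := hx
        have h1x : (0 : ℝ) < 1 + x := by linarith
        have h1xne : (1 : ℝ) + x ≠ 0 := ne_of_gt h1x
        set t : ℝ := (1 - x) / (1 + x) with htdef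
        have ht0 : 0 ≤ t := div_nonneg (by linarith) (by linarith)
        have htne : (1 : ℝ) + t ≠ 0 := by positivity
        have harg : (1 - t) / (1 + t) = x := by
          rw [htdef]
          field_simp
          ring
        have h1t : 1 + t = 2 / (1 + x) := by
          rw [htdef]; field_simp
          all_goals ring
        have htx : t * (1 + x) = 1 - x := by
          show (1 - x) / (1 + x) * (1 + x) = 1 - x
          exact div_mul_cancel₀ _ h1xne
        clear_value t
        -- e_P : 2^D * P.eval x = (1+x)^D * Q.eval t
        have e_P : (2 : ℝ) ^ D * P.eval x = (1 + x) ^ D * Q.eval t := by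
          have h := mlT_eval D P hdeg t htne
          rw [harg] at h
          rw [← hQ] at h
          rw [h, h1t, div_pow]
          field_simp
        have hkey := key t ht0
        set A := (mlEv m f).eval t
        set B := (mlEv m g).eval t
        set Cc := (mlOd m f).eval t
        set E := (mlOd m g).eval t
        set u : ℝ := (1 + x) ^ m with hu
        have e2 : (1 + x) ^ D = u ^ 2 * (1 + x) := by
          rw [hu, hm, ← pow_mul, ← pow_succ, Nat.mul_comm]
        have es1 : s₁.eval x = (c * ((1 + x) ^ m * A)) ^ 2 + (c * ((1 + x) ^ m * B)) ^ 2 := by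
          rw [hs1, eval_add, eval_pow, eval_pow, eval_mul, eval_mul, eval_C,
            mlT_eval m (mlEv m f) (mlEv_natDegree m f) x h1xne,
            mlT_eval m (mlEv m g) (mlEv_natDegree m g) x h1xne, ← htdef]
        have es2 : s₂.eval x = (c * ((1 + x) ^ m * Cc)) ^ 2 + (c * ((1 + x) ^ m * E)) ^ 2 := by
          rw [hs2, eval_add, eval_pow, eval_pow, eval_mul, eval_mul, eval_C,
            mlT_eval m (mlOd m f) (mlOd_natDegree m f) x h1xne,
            mlT_eval m (mlOd m g) (mlOd_natDegree m g) x h1xne, ← htdef]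
        rw [eval_add, eval_mul, eval_mul, eval_add, eval_sub, eval_one, eval_X, es1, es2]
        rw [hkey] at e_P
        rw [← hu]
        linear_combination c ^ 2 * e_P - P.eval x * hc2 +
          c ^ 2 * ((A ^ 2 + B ^ 2) + t * (Cc ^ 2 + E ^ 2)) * e2 +
          c ^ 2 * u ^ 2 * (Cc ^ 2 + E ^ 2) * htx
      have hPeq : P = (1 + X) * s₁ + (1 - X) * s₂ := by
        have hzero : P - ((1 + X) * s₁ + (1 - X) * s₂) = 0 := by
          apply eq_zero_of_infinite_isRoot
          refine (Set.Ioo_infinite (by norm_num : (0:ℝ) < 1)).mono ?_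
          intro x hx
          simp only [Set.mem_setOf_eq, IsRoot, eval_sub]
          rw [hpoint x hx]
          ring
        exact sub_eq_zero.mp hzero
      intro x
      rw [hPeq]
      simp [eval_add, eval_mul, eval_sub, eval_one, eval_X]
  · rintro ⟨s₁, s₂, hs₁, hs₂, _, _, heq⟩ x hx
    rw [heq x]
    have h1 : (0 : ℝ) ≤ 1 + x := by linarith [hx.1]
    have h2 : (0 : ℝ) ≤ 1 - x := by linarith [hx.2]
    exact add_nonneg (mul_nonneg h1 (ml_isSOS_eval_nonneg hs₁ x))
      (mul_nonneg h2 (ml_isSOS_eval_nonneg hs₂ x))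
end
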